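/- For any convex combination ρ = αμ + (1−α)ν of computable measures μ and ν with α ∈ (0,1) a computable real, the ρ-Martin-Löf random sequences are exactly the union of the μ-Martin-Löf random sequences and the ν-Martin-Löf random sequences. -/

import Mathlib

open MeasureTheory Filter

/-- Cantor space `2^ω`. -/
abbrev Cantor : Type := ℕ → Bool

/-- The first `n` bits of a sequence, as a finite binary string. -/
def pref (X : Cantor) (n : ℕ) : List Bool := List.ofFn fun i : Fin n => X i

/-- The basic open (cylinder) set determined by a finite string `σ`. -/
def cyl (σ : List Bool) : Set Cantor := {X | pref X σ.length = σ}

/-- Partial recursiveness relative to an oracle `O : ℕ → ℕ`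
(the clauses of `Nat.Partrec` plus an oracle clause). -/
inductive RecIn (O : ℕ → ℕ) : (ℕ →. ℕ) → Prop
  | zero : RecIn O (pure 0)
  | succ : RecIn O Nat.succ
  | left : RecIn O ↑fun n : ℕ => n.unpair.1
  | right : RecIn O ↑fun n : ℕ => n.unpair.2
  | oracle : RecIn O ↑O
  | pair {f g} : RecIn O f → RecIn O g → RecIn O fun n => Nat.pair <$> f n <*> g n
  | comp {f g} : RecIn O f → RecIn O g → RecIn O fun n => g n >>= f
  | prec {f g} : RecIn O f → RecIn O g → RecIn O (Nat.unpaired fun a n =>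
      n.rec (f a) fun y IH => do let i ← IH; g (Nat.pair a (Nat.pair y i)))
  | rfind {f} : RecIn O f →
      RecIn O fun a => Nat.rfind fun n => (fun m => m = 0) <$> f (Nat.pair a n)

/-- `f` is computable relative to the oracle `A ∈ 2^ω`. -/
def ComputableInOracle (A : Cantor) {α β : Type} [Primcodable α] [Primcodable β]
    (f : α → β) : Prop :=
  RecIn (fun n => (A n).toNat) fun n =>
    Part.bind (Part.ofOption (Encodable.decode (α := α) n)) fun a =>
      Part.some (Encodable.encode (f a))

/-- `X ∈ 2^ω` is a computable sequence. -/
def ComputableSeq (X : Cantor) : Prop := Computable X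

/-- A computable real: one with a computable sequence of rational approximations. -/
def ComputableReal (r : ℝ) : Prop :=
  ∃ q : ℕ → ℚ, Computable q ∧ ∀ n, |r - (q n : ℝ)| ≤ (2 : ℝ)⁻¹ ^ n

/-- A computable probability measure on Cantor space: the measures of cylinders are
uniformly computable reals. -/
def ComputableMeasure (μ : Measure Cantor) : Prop :=
  IsProbabilityMeasure μ ∧
    ∃ q : List Bool → ℕ → ℚ, Computable₂ q ∧
      ∀ σ n, |(μ (cyl σ)).toReal - (q σ n : ℝ)| ≤ (2 : ℝ)⁻¹ ^ n

/-- A uniformly effectively open sequence of classes: each `U i` is the union of a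
computable enumeration of cylinders. -/
def EffOpen (U : ℕ → Set Cantor) : Prop :=
  ∃ f : ℕ → ℕ → Option (List Bool), Computable₂ f ∧
    ∀ i, U i = ⋃ n : ℕ, Option.elim (f i n) ∅ cyl

/-- A uniformly `A`-effectively open sequence of classes. -/
def EffOpenIn (A : Cantor) (U : ℕ → Set Cantor) : Prop :=
  ∃ f : ℕ → ℕ → Option (List Bool), ComputableInOracle A (fun p : ℕ × ℕ => f p.1 p.2) ∧
    ∀ i, U i = ⋃ n : ℕ, Option.elim (f i n) ∅ cyl

/-- A `μ`-Martin-Löf test. -/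
def MLTest (μ : Measure Cantor) (U : ℕ → Set Cantor) : Prop :=
  EffOpen U ∧ ∀ i, μ (U i) ≤ (2 : ENNReal)⁻¹ ^ i

/-- `X` is `μ`-Martin-Löf random. -/
def MLRandom (μ : Measure Cantor) (X : Cantor) : Prop :=
  ∀ U : ℕ → Set Cantor, MLTest μ U → X ∉ ⋂ i, U i

/-- A `μ`-Martin-Löf test relative to the oracle `A`. -/
def MLTestIn (A : Cantor) (μ : Measure Cantor) (U : ℕ → Set Cantor) : Prop :=
  EffOpenIn A U ∧ ∀ i, μ (U i) ≤ (2 : ENNReal)⁻¹ ^ i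

/-- `X` is `μ`-Martin-Löf random relative to the oracle `A`. -/
def MLRandomIn (A : Cantor) (μ : Measure Cantor) (X : Cantor) : Prop :=
  ∀ U : ℕ → Set Cantor, MLTestIn A μ U → X ∉ ⋂ i, U i

/-- A `μ`-Schnorr test: a Martin-Löf test whose levels have measure exactly `2⁻ⁱ`. -/
def SchnorrTest (μ : Measure Cantor) (U : ℕ → Set Cantor) : Prop :=
  EffOpen U ∧ ∀ i, μ (U i) = (2 : ENNReal)⁻¹ ^ i

/-- `X` is `μ`-Schnorr random. -/
def SchnorrRandom (μ : Measure Cantor) (X : Cantor) : Prop :=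
  ∀ U : ℕ → Set Cantor, SchnorrTest μ U → X ∉ ⋂ i, U i

/-- The set of atoms of `μ`. -/
def Atoms (μ : Measure Cantor) : Set Cantor := {X | 0 < μ {X}}

/-- `lam` is the uniform (Lebesgue) measure on Cantor space. -/
def IsLebesgue (lam : Measure Cantor) : Prop :=
  ∀ σ : List Bool, lam (cyl σ) = (2 : ENNReal)⁻¹ ^ σ.length

/-- A total (truth-table) functional: every output bit is a computable function of a
computably bounded finite initial segment of the input. -/
def TTFunctional (Φ : Cantor → Cantor) : Prop :=
  ∃ (u : ℕ → ℕ) (g : List Bool → ℕ → Bool), Computable u ∧ Computable₂ g ∧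
    ∀ X n, Φ X n = g (pref X (u n)) n

/-- `B` is a Δ⁰₂ sequence: it has a uniformly computable approximation converging
pointwise to it. -/
def Delta02 (B : Cantor) : Prop :=
  ∃ Bs : ℕ → Cantor, Computable₂ (fun s n => Bs s n) ∧
    ∀ n, ∃ N, ∀ s, N ≤ s → Bs s n = B n

/-- `theta As X n` is the least stage `s` with `X↾n = As s↾n`, and `⊤ = +∞` if there
is no such stage. -/
noncomputable def theta (As : ℕ → Cantor) (X : Cantor) (n : ℕ) : ℕ∞ :=
  sInf {e : ℕ∞ | ∃ s : ℕ, e = (s : ℕ∞) ∧ pref X n = pref (As s) n}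

open Classical in
/-- The tally functional determined by the approximation `As`: the output is
`1^{θ(X,0)} 0 1^{θ(X,1)} 0 ⋯`, continuing with `1^ω` as soon as some `θ(X,n) = +∞`
(position `k` is a `0` exactly when `k = θ(X,0) + ⋯ + θ(X,m) + m` for some `m`). -/
noncomputable def tally (As : ℕ → Cantor) (X : Cantor) : Cantor := fun k =>
  if ∃ m : ℕ, (k : ℕ∞) = (∑ i ∈ Finset.range (m + 1), theta As X i) + (m : ℕ∞)
    then false else true

/-- The join `A ⊕ B` of two sequences. -/
def join (A B : Cantor) : Cantor := fun k => if k % 2 = 0 then A (k / 2) else B (k / 2)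

/-! Both inclusions transfer tests. Since `ρ ≥ α μ`, a `ρ`-test with its levels shifted by `c`,
where `2⁻ᶜ ≤ α`, is a `μ`-test; so `μ`-random sequences are `ρ`-random, and likewise for `ν`.
Conversely, if `X` is covered by a `μ`-test `(Uᵢ)` and a `ν`-test `(Vᵢ)`, then `(Uᵢ ∩ Vᵢ)` is a
`ρ`-test, as `ρ (Uᵢ ∩ Vᵢ) ≤ α 2⁻ⁱ + (1 - α) 2⁻ⁱ`. It is effectively open because two cylinders
meet in a cylinder or not at all. -/

lemma length_pref (X : Cantor) (n : ℕ) : (pref X n).length = n := by simp [pref]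

lemma take_pref (X : Cantor) {m n : ℕ} (h : m ≤ n) : (pref X n).take m = pref X m := by
  apply List.ext_getElem
  · simp [pref, h]
  · intro i _ _
    simp [pref, List.getElem_take]

lemma pref_prefix_pref (X : Cantor) {m n : ℕ} (h : m ≤ n) : pref X m <+: pref X n := by
  rw [List.prefix_iff_eq_take, length_pref, take_pref X h]

lemma cyl_subset_cyl {σ τ : List Bool} (h : σ <+: τ) : cyl τ ⊆ cyl σ := fun X (hX : _ = τ) =>
  show pref X σ.length = σ by
    rw [← take_pref X h.length_le, hX, ← List.prefix_iff_eq_take.1 h]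

lemma prefix_or_prefix_of_mem_cyl {σ τ : List Bool} {X : Cantor} (hσ : X ∈ cyl σ)
    (hτ : X ∈ cyl τ) : σ <+: τ ∨ τ <+: σ := by
  change pref X σ.length = σ at hσ
  change pref X τ.length = τ at hτ
  rcases le_total σ.length τ.length with h | h
  · exact .inl (hσ ▸ hτ ▸ pref_prefix_pref X h)
  · exact .inr (hσ ▸ hτ ▸ pref_prefix_pref X h)

def cylMeet (σ τ : List Bool) : Option (List Bool) :=
  if σ <+: τ then some τ else if τ <+: σ then some σ else none

lemma cyl_inter_cyl (σ τ : List Bool) : cyl σ ∩ cyl τ = (cylMeet σ τ).elim ∅ cyl := by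
  unfold cylMeet
  split_ifs with hστ hτσ
  · exact Set.inter_eq_right.2 (cyl_subset_cyl hστ)
  · exact Set.inter_eq_left.2 (cyl_subset_cyl hτσ)
  · exact Set.eq_empty_of_forall_notMem fun X ⟨hσ, hτ⟩ =>
      (prefix_or_prefix_of_mem_cyl hσ hτ).elim hστ hτσ

lemma primrecRel_isPrefix : PrimrecRel fun σ τ : List Bool => σ <+: τ :=
  (Primrec.eq.comp Primrec.fst
    (Primrec.list_take.comp (Primrec.list_length.comp Primrec.fst) Primrec.snd)).of_eq
    fun _ => List.prefix_iff_eq_take.symm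

lemma primrec₂_cylMeet : Primrec₂ cylMeet :=
  Primrec.ite primrecRel_isPrefix (Primrec.option_some.comp Primrec.snd)
    (Primrec.ite (primrecRel_isPrefix.comp Primrec.snd Primrec.fst)
      (Primrec.option_some.comp Primrec.fst) (Primrec.const none))

def optCylMeet (o₁ o₂ : Option (List Bool)) : Option (List Bool) :=
  o₁.bind fun σ => o₂.bind (cylMeet σ)

lemma optCylMeet_elim (o₁ o₂ : Option (List Bool)) :
    (optCylMeet o₁ o₂).elim ∅ cyl = o₁.elim ∅ cyl ∩ o₂.elim ∅ cyl := by
  cases o₁ <;> cases o₂ <;> simp [optCylMeet, cyl_inter_cyl]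

lemma primrec₂_optCylMeet : Primrec₂ optCylMeet :=
  Primrec.option_bind Primrec.fst
    (Primrec.option_bind (Primrec.snd.comp Primrec.fst)
      (primrec₂_cylMeet.comp (Primrec.snd.comp Primrec.fst) Primrec.snd).to₂).to₂

lemma EffOpen.inter {U V : ℕ → Set Cantor} (hU : EffOpen U) (hV : EffOpen V) :
    EffOpen fun i => U i ∩ V i := by
  obtain ⟨f, hf, hfU⟩ := hU
  obtain ⟨g, hg, hgV⟩ := hV
  refine ⟨fun i n => optCylMeet (f i n.unpair.1) (g i n.unpair.2), ?_, fun i => ?_⟩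
  · exact primrec₂_optCylMeet.to_comp.comp
      (hf.comp Computable.fst (Computable.fst.comp (Computable.unpair.comp Computable.snd)))
      (hg.comp Computable.fst (Computable.snd.comp (Computable.unpair.comp Computable.snd)))
  · ext X
    simp only [hfU, hgV, optCylMeet_elim, Set.mem_inter_iff, Set.mem_iUnion]
    constructor
    · rintro ⟨⟨a, ha⟩, ⟨b, hb⟩⟩
      exact ⟨Nat.pair a b, by simpa using ha, by simpa using hb⟩
    · rintro ⟨n, ha, hb⟩
      exact ⟨⟨_, ha⟩, ⟨_, hb⟩⟩

lemma EffOpen.comp_add {U : ℕ → Set Cantor} (hU : EffOpen U) (c : ℕ) :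
    EffOpen fun i => U (i + c) := by
  obtain ⟨f, hf, hfU⟩ := hU
  exact ⟨fun i n => f (i + c) n,
    hf.comp ((Primrec.nat_add.comp Primrec.fst (Primrec.const c)).to_comp) Computable.snd,
    fun i => hfU (i + c)⟩

section Tests

variable {μ ν ρ : Measure Cantor} {X : Cantor}

lemma MLTest.inter {U V : ℕ → Set Cantor} {a b : ENNReal} (hU : MLTest μ U) (hV : MLTest ν V)
    (hρ : ρ ≤ a • μ + b • ν) (hab : a + b ≤ 1) : MLTest ρ fun i => U i ∩ V i := by
  refine ⟨hU.1.inter hV.1, fun i => ?_⟩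
  calc ρ (U i ∩ V i) ≤ a * μ (U i ∩ V i) + b * ν (U i ∩ V i) := (hρ _).trans_eq (by simp)
    _ ≤ a * μ (U i) + b * ν (V i) := by
        gcongr
        exacts [Set.inter_subset_left, Set.inter_subset_right]
    _ ≤ a * 2⁻¹ ^ i + b * 2⁻¹ ^ i := by grw [hU.2 i, hV.2 i]
    _ = (a + b) * 2⁻¹ ^ i := (add_mul _ _ _).symm
    _ ≤ 2⁻¹ ^ i := by grw [hab, one_mul]

lemma MLRandom.or_of_le_add_smul {a b : ENNReal} (hρ : ρ ≤ a • μ + b • ν) (hab : a + b ≤ 1)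
    (hX : MLRandom ρ X) : MLRandom μ X ∨ MLRandom ν X := by
  by_contra! ⟨hμX, hνX⟩
  simp only [MLRandom, not_forall, not_not] at hμX hνX
  obtain ⟨U, hU, hXU⟩ := hμX
  obtain ⟨V, hV, hXV⟩ := hνX
  exact hX _ (hU.inter hV hρ hab) (Set.mem_iInter.2 fun i =>
    ⟨Set.mem_iInter.1 hXU i, Set.mem_iInter.1 hXV i⟩)

lemma MLTest.comp_add {U : ℕ → Set Cantor} {c : ℕ} (hU : MLTest ρ U)
    (hμ : (2⁻¹ : ENNReal) ^ c • μ ≤ ρ) : MLTest μ fun i => U (i + c) := by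
  refine ⟨hU.1.comp_add c, fun i => ?_⟩
  have h : 2⁻¹ ^ c * μ (U (i + c)) ≤ 2⁻¹ ^ c * 2⁻¹ ^ i :=
    calc 2⁻¹ ^ c * μ (U (i + c)) ≤ ρ (U (i + c)) := by simpa using hμ (U (i + c))
      _ ≤ 2⁻¹ ^ (i + c) := hU.2 _
      _ = 2⁻¹ ^ c * 2⁻¹ ^ i := by rw [pow_add, mul_comm]
  exact (ENNReal.mul_le_mul_iff_right (by simp) (by simp)).1 h

lemma MLRandom.of_smul_le {a : ENNReal} (ha : a ≠ 0) (hμ : a • μ ≤ ρ) (hX : MLRandom μ X) :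
    MLRandom ρ X := by
  intro U hU hXU
  obtain ⟨c, hc⟩ := ENNReal.exists_inv_two_pow_lt ha
  have hcμ : (2⁻¹ : ENNReal) ^ c • μ ≤ ρ := fun s => by
    grw [← hμ s, Measure.smul_apply, Measure.smul_apply, smul_eq_mul, smul_eq_mul, hc.le]
  refine hX _ (hU.comp_add hcμ) ?_
  exact Set.mem_iInter.2 fun i => Set.mem_iInter.1 hXU (i + c)

end Tests

theorem stmt1_general (μ ν : Measure Cantor)
    (α : ℝ) (hα0 : 0 < α) (hα1 : α < 1) (X : Cantor) :
    MLRandom (ENNReal.ofReal α • μ + ENNReal.ofReal (1 - α) • ν) X ↔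
      MLRandom μ X ∨ MLRandom ν X := by
  have hsum : ENNReal.ofReal α + ENNReal.ofReal (1 - α) = 1 := by
    rw [← ENNReal.ofReal_add hα0.le (sub_pos.2 hα1).le, add_sub_cancel, ENNReal.ofReal_one]
  refine ⟨MLRandom.or_of_le_add_smul le_rfl hsum.le, ?_⟩
  rintro (h | h)
  · exact h.of_smul_le (ENNReal.ofReal_pos.2 hα0).ne' (Measure.le_add_right le_rfl)
  · exact h.of_smul_le (ENNReal.ofReal_pos.2 (sub_pos.2 hα1)).ne' (Measure.le_add_left le_rfl)

/-- For a convex combination `ρ = αμ + (1-α)ν` with `α ∈ (0,1)` a computable real,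
`MLR_ρ = MLR_μ ∪ MLR_ν`. -/
theorem stmt1 (μ ν : Measure Cantor) (hμ : ComputableMeasure μ) (hν : ComputableMeasure ν)
    (α : ℝ) (hα0 : 0 < α) (hα1 : α < 1) (hαc : ComputableReal α) (X : Cantor) :
    MLRandom (ENNReal.ofReal α • μ + ENNReal.ofReal (1 - α) • ν) X ↔
      MLRandom μ X ∨ MLRandom ν X :=
  stmt1_general μ ν α hα0 hα1 X
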